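/- Let $R$ be a ring with ideals $I_1, \dots, I_n$ such that $I_1 \cap \cdots \cap I_n = 0$, and suppose each quotient ring $R/I_i$ has a classical right quotient ring $Q_i$. Assume that for each pair $i \neq j$, the image of $I_j$ in $R/I_i$ contains a regular element of $R/I_i$. Then for each $i$ there exists $a_i \in \bigcap_{j \neq i} I_j$ whose image in $R/I_i$ is a regular element of $R/I_i$. -/
import Mathlib


/-- `Q` is a classical right quotient ring of `R` via the embedding `f`: `f` is injective,
regular elements of `R` become invertible, and every element of `Q` has the form
`f a * (f s)⁻¹` with `s` regular (expressed as `q * f s = f a`). -/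
def IsClassicalRightQuotientRing (R Q : Type*) [Ring R] [Ring Q] (f : R →+* Q) : Prop :=
  Function.Injective f ∧ (∀ s : R, IsRegular s → IsUnit (f s)) ∧
    ∀ q : Q, ∃ a s : R, IsRegular s ∧ q * f s = f a

theorem list_prod_regular {M : Type*} [Monoid M] (l : List M)
    (h : ∀ x ∈ l, IsRegular x) : IsRegular l.prod := by
  induction l with
  | nil => simpa using isRegular_one
  | cons x l ih =>
    rw [List.prod_cons]
    exact (h x (.head l)).mul (ih fun y hy => h y (.tail x hy))

/-- Given ideals `I₁, …, Iₙ` of `R` with zero intersection such that each `R/Iᵢ` has a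
classical right quotient ring and for `i ≠ j` the image of `Iⱼ` in `R/Iᵢ` contains a
regular element, for each `i` there is `aᵢ ∈ ⋂_{j ≠ i} Iⱼ` whose image in `R/Iᵢ` is
regular. -/
theorem exists_regular_in_intersection
    {R : Type*} [Ring R] {n : ℕ} (I : Fin n → TwoSidedIdeal R)
    (hbot : ∀ r : R, (∀ i, r ∈ I i) → r = 0)
    (S : Fin n → Type*) [∀ i, Ring (S i)]
    (f : ∀ i, R →+* S i) (hsurj : ∀ i, Function.Surjective (f i))
    (hker : ∀ i (r : R), f i r = 0 ↔ r ∈ I i)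
    (Q : Fin n → Type*) [∀ i, Ring (Q i)] (g : ∀ i, S i →+* Q i)
    (hq : ∀ i, IsClassicalRightQuotientRing (S i) (Q i) (g i))
    (hpair : ∀ i j, i ≠ j → ∃ a ∈ I j, IsRegular (f i a)) :
    ∀ i, ∃ a : R, (∀ j, j ≠ i → a ∈ I j) ∧ IsRegular (f i a) := by
  intro i
  -- choose for each j an element b j; for j ≠ i it lies in I j with f i (b j) regular
  have choice : ∀ j : Fin n, ∃ b : R, j ≠ i → b ∈ I j ∧ IsRegular (f i b) := by
    intro j
    by_cases hji : j = i
    · exact ⟨1, fun h => absurd hji h⟩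
    · obtain ⟨a, ha, hreg⟩ := hpair i j (Ne.symm hji)
      exact ⟨a, fun _ => ⟨ha, hreg⟩⟩
  choose b hb using choice
  set l : List (Fin n) := (List.finRange n).filter (· ≠ i) with hl
  refine ⟨(l.map b).prod, ?_, ?_⟩
  · intro j hj
    refine TwoSidedIdeal.listProd_mem _ _ _ ⟨j, ?_, (hb j hj).1⟩
    simp [hl, List.mem_filter, hj]
  · rw [map_list_prod, List.map_map]
    refine list_prod_regular _ fun x hx => ?_
    simp only [List.mem_map] at hx
    obtain ⟨j, hj, rfl⟩ := hx
    have : j ≠ i := by simpa [hl, List.mem_filter] using hj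
    exact (hb j this).2
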